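/- Let N be a rooted phylogenetic network on a finite set X and let Ñ be its normalisation. Then the set of clusters of Ñ equals the set of clusters of visible vertices of N: {C_Ñ(v) : v a vertex of Ñ} = {C_N(v) : v ∈ V_vis(N)}. -/

import Mathlib

/-!
Formalisation framework for rooted phylogenetic networks.

A network is represented as a directed graph on an ambient vertex type `V`:
a vertex set `verts`, a root vertex `root`, and an arc relation `arc`.
-/

structure Net (V : Type*) where
  verts : Set V
  root : V
  arc : V → V → Prop

namespace Net

variable {V : Type*} {W : Type*}

/-- `N.reach u v` means there is a (possibly empty) directed path from `u` to `v`. -/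
def reach (N : Net V) : V → V → Prop := Relation.ReflTransGen N.arc

/-- The in-degree of a vertex. -/
noncomputable def inDeg (N : Net V) (v : V) : ℕ := {u | N.arc u v}.ncard

/-- The out-degree of a vertex. -/
noncomputable def outDeg (N : Net V) (v : V) : ℕ := {w | N.arc v w}.ncard

/-- The leaves of `N`: the vertices of out-degree 0. -/
def leaves (N : Net V) : Set V := {v ∈ N.verts | N.outDeg v = 0}

/-- `N.IsPathFrom u v l` : the list `l` is a directed path in `N` from `u` to `v`
(consecutive entries joined by arcs; a one-element list is the empty path). -/
def IsPathFrom (N : Net V) (u v : V) (l : List V) : Prop :=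
  l.Chain' N.arc ∧ l.head? = some u ∧ l.getLast? = some v

/-- A vertex is visible if some leaf is such that every directed path from the
root to that leaf passes through the vertex. -/
def Visible (N : Net V) (x : V) : Prop :=
  x ∈ N.verts ∧ ∃ y ∈ N.leaves, ∀ l : List V, N.IsPathFrom N.root y l → x ∈ l

/-- A subdividing vertex is one of in-degree 1 and out-degree 1. -/
def Subdividing (N : Net V) (v : V) : Prop := N.inDeg v = 1 ∧ N.outDeg v = 1

/-- The digraph `Cov(N)` on the visible vertices of `N`: an arc `(u,v)` whenever
`u ≠ v`, `u →_N v`, and no visible vertex lies strictly between `u` and `v`. -/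
def cov (N : Net V) : Net V where
  verts := {v | N.Visible v}
  root := N.root
  arc u v := N.Visible u ∧ N.Visible v ∧ u ≠ v ∧ N.reach u v ∧
    ¬ ∃ w, N.Visible w ∧ w ≠ u ∧ w ≠ v ∧ N.reach u w ∧ N.reach w v

/-- The normalisation `Ñ` of `N`: obtained from `Cov(N)` by suppressing every
subdividing vertex.  Its vertices are the visible vertices of `N` that are not
subdividing in `Cov(N)`, with an arc `(u,v)` whenever `Cov(N)` has a directed path
from `u` to `v` (of length at least one) all of whose interior vertices are
subdividing in `Cov(N)`. -/
def normalise (N : Net V) : Net V where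
  verts := {v | N.Visible v ∧ ¬ N.cov.Subdividing v}
  root := N.root
  arc u v := (N.Visible u ∧ ¬ N.cov.Subdividing u) ∧ (N.Visible v ∧ ¬ N.cov.Subdividing v) ∧
    ∃ l : List V, N.cov.IsPathFrom u v l ∧ 2 ≤ l.length ∧
      ∀ w ∈ l.tail.dropLast, N.cov.Subdividing w

/-- `N` is a rooted phylogenetic network on the finite nonempty leaf set `X`. -/
structure IsPhylo (N : Net V) (X : Set V) : Prop where
  finite : N.verts.Finite
  nonempty : X.Nonempty
  arc_mem : ∀ ⦃u v : V⦄, N.arc u v → u ∈ N.verts ∧ v ∈ N.verts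
  acyclic : ∀ ⦃u v : V⦄, N.arc u v → ¬ N.reach v u
  root_mem : N.root ∈ N.verts
  root_inDeg : N.inDeg N.root = 0
  root_unique : ∀ v ∈ N.verts, N.inDeg v = 0 → v = N.root
  leaves_eq : N.leaves = X
  leaf_inDeg : ∀ x ∈ X, N.inDeg x = 1
  interior_deg : ∀ v ∈ N.verts, v ≠ N.root → v ∉ X →
    (N.inDeg v = 1 ∧ 2 ≤ N.outDeg v) ∨ (N.outDeg v = 1 ∧ 2 ≤ N.inDeg v)

/-- `N` has no shortcuts: no arc `(u,v)` such that there is also a directed path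
from `u` to `v` of length at least 2 (i.e. a path-list with at least 3 entries). -/
def NoShortcuts (N : Net V) : Prop :=
  ∀ u v : V, N.arc u v → ¬ ∃ l : List V, N.IsPathFrom u v l ∧ 3 ≤ l.length

/-- Tree-child: every vertex is visible. -/
def TreeChild (N : Net V) : Prop := ∀ v ∈ N.verts, N.Visible v

/-- Normal: tree-child with no shortcuts. -/
def Normal (N : Net V) : Prop := N.TreeChild ∧ N.NoShortcuts

/-- A tree: every vertex has in-degree at most 1. -/
def IsTree (N : Net V) : Prop := ∀ v ∈ N.verts, N.inDeg v ≤ 1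

/-- The cluster of `v`: the set of leaves reachable from `v`. -/
def cluster (N : Net V) (v : V) : Set V := {x ∈ N.leaves | N.reach v x}

/-- The identifying set of `v`: the set of leaves `x` such that every directed
path from the root to `x` passes through `v`. -/
def ident (N : Net V) (v : V) : Set V :=
  {x ∈ N.leaves | ∀ l : List V, N.IsPathFrom N.root x l → v ∈ l}

/-- A digraph isomorphism between two networks, given by the map `f`. -/
def NetEquiv (M : Net V) (M' : Net W) (f : V → W) : Prop :=
  Set.BijOn f M.verts M'.verts ∧
    ∀ u ∈ M.verts, ∀ v ∈ M.verts, (M.arc u v ↔ M'.arc (f u) (f v))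

/-- Two networks over the same ambient type are equivalent relative to a leaf set
`X` if there is a digraph isomorphism between them fixing each element of `X`. -/
def EquivOn (M M' : Net V) (X : Set V) : Prop :=
  ∃ f : V → V, NetEquiv M M' f ∧ ∀ x ∈ X, f x = x

/-- `N₁ ⊕ N₂` : disjoint copies of `N₁` and `N₂` under a new root (`none`). -/
def oplus {V₁ V₂ : Type*} (N₁ : Net V₁) (N₂ : Net V₂) : Net (Option (V₁ ⊕ V₂)) where
  verts := insert none
    ((fun v => some (Sum.inl v)) '' N₁.verts ∪ (fun v => some (Sum.inr v)) '' N₂.verts)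
  root := none
  arc a b :=
    match a, b with
    | none, some (Sum.inl w) => w = N₁.root
    | none, some (Sum.inr w) => w = N₂.root
    | some (Sum.inl u), some (Sum.inl w) => N₁.arc u w
    | some (Sum.inr u), some (Sum.inr w) => N₂.arc u w
    | _, _ => False

/-- `N₁ ⊗ N₂` : identify each leaf `x` of `N₁` with the root of its own copy of `N₂`;
the copy of a non-leaf vertex `u` of `N₁` is `Sum.inl u`, and the vertex `w` of the
copy of `N₂` attached at leaf `x` of `N₁` is `Sum.inr (x, w)`. -/
def otimes {V₁ V₂ : Type*} (N₁ : Net V₁) (N₂ : Net V₂) : Net (V₁ ⊕ V₁ × V₂) where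
  verts := Sum.inl '' (N₁.verts \ N₁.leaves) ∪ Sum.inr '' (N₁.leaves ×ˢ N₂.verts)
  root := Sum.inl N₁.root
  arc a b :=
    match a, b with
    | Sum.inl u, Sum.inl w => N₁.arc u w ∧ w ∉ N₁.leaves
    | Sum.inl u, Sum.inr (x, w) => x ∈ N₁.leaves ∧ N₁.arc u x ∧ w = N₂.root
    | Sum.inr (x, w), Sum.inr (x', w') => x = x' ∧ x ∈ N₁.leaves ∧ N₂.arc w w'
    | _, _ => False

end Net

/-- A hierarchy: a collection of sets any two of which are disjoint or nested. -/
def IsHierarchy {V : Type*} (C : Set (Set V)) : Prop :=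
  ∀ A ∈ C, ∀ B ∈ C, A ∩ B = ∅ ∨ A ⊆ B ∨ B ⊆ A


/-!
A leaf `x` below a visible vertex `v` is reached from `v` along arcs of `Cov(N)`: the first
visible vertex after `v` on the way to `x` (a minimal element, `N` being finite and acyclic) is a
`Cov(N)`-child of `v` that still reaches `x`. Walking down this way through subdividing vertices
shows that a vertex of `Ñ` reaches in `Ñ` every leaf it reaches in `N`, and that `Ñ` has the same
leaves as `N`; so every vertex of `Ñ` has the same cluster in `Ñ` as in `N`. Conversely, a visible
vertex that is subdividing in `Cov(N)` has the cluster of its unique `Cov(N)`-child, and descending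
through such vertices ends at a vertex of `Ñ`.
-/

open Relation

theorem Relation.wellFounded_transGen_of_finite {α : Type*} {r : α → α → Prop} {s : Set α}
    (hs : s.Finite) (hr : ∀ ⦃a b⦄, r a b → a ∈ s) (hirr : ∀ a, ¬ TransGen r a a) :
    WellFounded (TransGen r) := by
  refine Subrelation.wf (fun {a b} hab => ?_) (measure fun a => {c | TransGen r c a}.ncard).wf
  have hfin : {c | TransGen r c b}.Finite :=
    hs.subset fun c hc => (TransGen.head'_iff.mp hc).elim fun _ h => hr h.1
  refine Set.ncard_lt_ncard ((Set.ssubset_iff_of_subset fun c hc => hc.trans hab).mpr ?_) hfin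
  exact ⟨a, hab, hirr a⟩

namespace Net

variable {V : Type*}

section Paths

variable {M : Net V} {u v w : V} {l : List V}

theorem isPathFrom_singleton : M.IsPathFrom v v [v] :=
  ⟨List.isChain_singleton v, rfl, rfl⟩

theorem isPathFrom_cons_cons {b : V} {t : List V} :
    M.IsPathFrom u v (u :: b :: t) ↔ M.arc u b ∧ M.IsPathFrom b v (b :: t) := by
  refine ⟨fun ⟨hc, _, hl⟩ => ?_, fun ⟨hub, hc, _, hl⟩ => ?_⟩
  · exact ⟨(List.isChain_cons_cons.mp hc).1, (List.isChain_cons_cons.mp hc).2, rfl, hl⟩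
  · exact ⟨List.isChain_cons_cons.mpr ⟨hub, hc⟩, rfl, hl⟩

theorem IsPathFrom.reach_of_mem (h : M.IsPathFrom u v l) (hw : w ∈ l) : M.reach w v := by
  refine h.1.backwards_induction (M.reach · v) l (fun _ _ hxy hy => hy.head hxy) ?_ w hw
  intro hne
  rw [Option.some.inj ((List.getLast?_eq_some_getLast hne).symm.trans h.2.2)]
  exact ReflTransGen.refl

theorem exists_isPathFrom_of_reach (h : M.reach u v) : ∃ l, M.IsPathFrom u v l := by
  obtain ⟨l, hchain, hlast⟩ := List.exists_isChain_cons_of_relationReflTransGen h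
  exact ⟨u :: l, hchain, rfl, by rw [List.getLast?_eq_some_getLast (List.cons_ne_nil u l), hlast]⟩

def SubdividedArc (M : Net V) (u v : V) : Prop :=
  ∃ l : List V, M.IsPathFrom u v l ∧ 2 ≤ l.length ∧ ∀ w ∈ l.tail.dropLast, M.Subdividing w

theorem SubdividedArc.of_arc (h : M.arc u v) : M.SubdividedArc u v :=
  ⟨[u, v], isPathFrom_cons_cons.mpr ⟨h, isPathFrom_singleton⟩, le_rfl, by simp⟩

theorem SubdividedArc.cons (huv : M.arc u v) (hv : M.Subdividing v) (h : M.SubdividedArc v w) :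
    M.SubdividedArc u w := by
  obtain ⟨_ | ⟨v', _ | ⟨b, t⟩⟩, hp, hlen, hint⟩ := h
  · exact absurd hp.2.1 (by simp)
  · simp at hlen
  obtain rfl : v = v' := (Option.some.inj hp.2.1).symm
  refine ⟨u :: v :: b :: t, isPathFrom_cons_cons.mpr ⟨huv, hp⟩, by simp, ?_⟩
  simp only [List.tail_cons, List.dropLast_cons_cons, List.mem_cons] at hint ⊢
  rintro z (rfl | hz)
  exacts [hv, hint z hz]

theorem SubdividedArc.transGen (h : M.SubdividedArc u v) : TransGen M.arc u v := by
  obtain ⟨_ | ⟨u', _ | ⟨b, t⟩⟩, hp, hlen, -⟩ := h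
  · exact absurd hp.2.1 (by simp)
  · simp at hlen
  obtain rfl : u = u' := (Option.some.inj hp.2.1).symm
  obtain ⟨hub, hbv⟩ := isPathFrom_cons_cons.mp hp
  exact TransGen.head' hub (hbv.reach_of_mem List.mem_cons_self)

theorem outDeg_eq_zero_of_forall_not_arc (h : ∀ w, ¬ M.arc v w) : M.outDeg v = 0 := by
  simp [outDeg, h]

theorem not_arc_of_outDeg_eq_zero (hfin : {w | M.arc v w}.Finite) (h0 : M.outDeg v = 0) :
    ¬ M.arc v w := fun h => ((Set.ncard_eq_zero hfin).mp h0).subset h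

end Paths

variable {N : Net V} {u v w x : V}

theorem visible_of_mem_leaves (hx : x ∈ N.leaves) : N.Visible x :=
  ⟨hx.1, x, hx, fun _ hl => List.mem_of_mem_getLast? hl.2.2⟩

theorem transGen_of_cov_arc (h : N.cov.arc u v) : TransGen N.arc u v :=
  (reflTransGen_iff_eq_or_transGen.mp h.2.2.2.1).resolve_left h.2.2.1.symm

theorem normalise_arc_iff : N.normalise.arc u v ↔
    u ∈ N.normalise.verts ∧ v ∈ N.normalise.verts ∧ N.cov.SubdividedArc u v :=
  Iff.rfl

theorem transGen_of_normalise_arc (h : N.normalise.arc u v) : TransGen N.arc u v :=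
  TransGen.closed (fun _ _ => transGen_of_cov_arc) _ _ (normalise_arc_iff.mp h).2.2.transGen

theorem reach_of_normalise_reach (h : N.normalise.reach u v) : N.reach u v :=
  ReflTransGen.lift' id (fun _ _ hab => (transGen_of_normalise_arc hab).to_reflTransGen) _ _ h

variable {X : Set V}

theorem IsPhylo.not_transGen_self (hN : N.IsPhylo X) (a : V) : ¬ TransGen N.arc a a := fun h =>
  (TransGen.head'_iff.mp h).elim fun _ hab => hN.acyclic hab.1 hab.2

theorem IsPhylo.wellFounded_transGen (hN : N.IsPhylo X) : WellFounded (TransGen N.arc) :=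
  wellFounded_transGen_of_finite hN.finite (fun _ _ h => (hN.arc_mem h).1) hN.not_transGen_self

theorem IsPhylo.wellFounded_transGen_swap (hN : N.IsPhylo X) :
    WellFounded fun a b => TransGen N.arc b a :=
  (wellFounded_transGen_of_finite (r := Function.swap N.arc) hN.finite
    (fun _ _ h => (hN.arc_mem h).2) fun a h => hN.not_transGen_self a (transGen_swap.mp h)).mono
    fun _ _ h => transGen_swap.mpr h

theorem IsPhylo.root_reach (hN : N.IsPhylo X) (hv : v ∈ N.verts) : N.reach N.root v := by
  induction v using hN.wellFounded_transGen.induction with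
  | _ v ih =>
    by_cases hroot : v = N.root
    · exact hroot ▸ ReflTransGen.refl
    obtain ⟨u, hu⟩ := Set.nonempty_of_ncard_ne_zero fun h0 => hroot (hN.root_unique v hv h0)
    exact (ih u (TransGen.single hu) (hN.arc_mem hu).1).tail hu

theorem IsPhylo.exists_leaf_reach (hN : N.IsPhylo X) (hv : N.Visible v) :
    ∃ y ∈ N.leaves, N.reach v y := by
  obtain ⟨-, y, hy, hpaths⟩ := hv
  obtain ⟨l, hl⟩ := exists_isPathFrom_of_reach (hN.root_reach hy.1)
  exact ⟨y, hy, hl.reach_of_mem (hpaths l hl)⟩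

theorem IsPhylo.not_arc_of_mem_leaves (hN : N.IsPhylo X) (hx : x ∈ N.leaves) : ¬ N.arc x w :=
  not_arc_of_outDeg_eq_zero (hN.finite.subset fun _ h => (hN.arc_mem h).2) hx.2

theorem IsPhylo.not_cov_arc_of_mem_leaves (hN : N.IsPhylo X) (hx : x ∈ N.leaves) :
    ¬ N.cov.arc x w := fun h =>
  (TransGen.head'_iff.mp (transGen_of_cov_arc h)).elim fun _ hxc =>
    hN.not_arc_of_mem_leaves hx hxc.1

theorem IsPhylo.mem_normalise_verts_of_mem_leaves (hN : N.IsPhylo X) (hx : x ∈ N.leaves) :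
    x ∈ N.normalise.verts :=
  ⟨visible_of_mem_leaves hx, fun h => by
    simpa [outDeg_eq_zero_of_forall_not_arc fun _ => hN.not_cov_arc_of_mem_leaves hx] using h.2⟩

theorem IsPhylo.exists_cov_arc_reach (hN : N.IsPhylo X) (hv : N.Visible v) (hx : x ∈ N.leaves)
    (hvx : N.reach v x) (hne : v ≠ x) : ∃ w, N.cov.arc v w ∧ N.reach w x := by
  obtain ⟨m, ⟨hm, hmv, hvm, hmx⟩, hmin⟩ := hN.wellFounded_transGen.has_min
    {w | N.Visible w ∧ w ≠ v ∧ N.reach v w ∧ N.reach w x}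
    ⟨x, visible_of_mem_leaves hx, hne.symm, hvx, ReflTransGen.refl⟩
  refine ⟨m, ⟨hv, hm, hmv.symm, hvm, ?_⟩, hmx⟩
  rintro ⟨w, hw, hwv, hwm, hvw, hwm'⟩
  exact hmin w ⟨hw, hwv, hvw, hwm'.trans hmx⟩
    ((reflTransGen_iff_eq_or_transGen.mp hwm').resolve_left hwm.symm)

theorem IsPhylo.exists_subdividedArc_reach (hN : N.IsPhylo X) (hu : N.Visible u)
    (hx : x ∈ N.leaves) (hux : N.reach u x) (hne : u ≠ x) :
    ∃ w ∈ N.normalise.verts, N.cov.SubdividedArc u w ∧ N.reach w x := by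
  induction u using hN.wellFounded_transGen_swap.induction with
  | _ u ih =>
    obtain ⟨u', huu', hu'x⟩ := hN.exists_cov_arc_reach hu hx hux hne
    by_cases hsub : N.cov.Subdividing u'
    · have hu'ne : u' ≠ x := fun h => (hN.mem_normalise_verts_of_mem_leaves hx).2 (h ▸ hsub)
      obtain ⟨w, hw, hu'w, hwx⟩ := ih u' (transGen_of_cov_arc huu') huu'.2.1 hu'x hu'ne
      exact ⟨w, hw, .cons huu' hsub hu'w, hwx⟩
    · exact ⟨u', ⟨huu'.2.1, hsub⟩, .of_arc huu', hu'x⟩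

theorem IsPhylo.normalise_reach_of_reach (hN : N.IsPhylo X) (hv : v ∈ N.normalise.verts)
    (hx : x ∈ N.leaves) (hvx : N.reach v x) : N.normalise.reach v x := by
  induction v using hN.wellFounded_transGen_swap.induction with
  | _ v ih =>
    by_cases hne : v = x
    · exact hne ▸ ReflTransGen.refl
    obtain ⟨w, hw, hvw, hwx⟩ := hN.exists_subdividedArc_reach hv.1 hx hvx hne
    have harc : N.normalise.arc v w := ⟨hv, hw, hvw⟩
    exact .head harc (ih w (transGen_of_normalise_arc harc) hw hwx)

theorem IsPhylo.normalise_leaves (hN : N.IsPhylo X) : N.normalise.leaves = N.leaves := by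
  ext v
  refine ⟨fun ⟨hv, hout⟩ => ?_, fun hv => ⟨hN.mem_normalise_verts_of_mem_leaves hv, ?_⟩⟩
  · obtain ⟨y, hy, hvy⟩ := hN.exists_leaf_reach hv.1
    by_cases hne : v = y
    · exact hne ▸ hy
    obtain ⟨w, hw, hvw, -⟩ := hN.exists_subdividedArc_reach hv.1 hy hvy hne
    exact absurd ⟨hv, hw, hvw⟩
      (not_arc_of_outDeg_eq_zero (M := N.normalise) (hN.finite.subset fun _ h => h.2.1.1.1) hout)
  · refine outDeg_eq_zero_of_forall_not_arc fun w h => ?_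
    obtain ⟨c, hvc, -⟩ := TransGen.head'_iff.mp (normalise_arc_iff.mp h).2.2.transGen
    exact hN.not_cov_arc_of_mem_leaves hv hvc

theorem IsPhylo.cluster_normalise (hN : N.IsPhylo X) (hv : v ∈ N.normalise.verts) :
    N.normalise.cluster v = N.cluster v := by
  ext x
  simp only [cluster, hN.normalise_leaves, Set.mem_ofPred_eq]
  exact and_congr_right fun hx => ⟨reach_of_normalise_reach, hN.normalise_reach_of_reach hv hx⟩

theorem IsPhylo.cluster_eq_of_cov_children_eq_singleton (hN : N.IsPhylo X)
    (hw : {z | N.cov.arc v z} = {w}) : N.cluster v = N.cluster w := by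
  have hvw : N.cov.arc v w := hw.symm.subset rfl
  ext x
  refine ⟨fun ⟨hx, hvx⟩ => ⟨hx, ?_⟩, fun ⟨hx, hwx⟩ => ⟨hx, hvw.2.2.2.1.trans hwx⟩⟩
  have hne : v ≠ x := fun h => hN.not_cov_arc_of_mem_leaves (h ▸ hx) hvw
  obtain ⟨w', hvw', hw'x⟩ := hN.exists_cov_arc_reach hvw.1 hx hvx hne
  rwa [show w' = w from hw.subset hvw'] at hw'x

theorem IsPhylo.exists_mem_normalise_verts_cluster_eq (hN : N.IsPhylo X) (hv : N.Visible v) :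
    ∃ u ∈ N.normalise.verts, N.cluster u = N.cluster v := by
  induction v using hN.wellFounded_transGen_swap.induction with
  | _ v ih =>
    by_cases hsub : N.cov.Subdividing v
    · obtain ⟨w, hw⟩ := Set.ncard_eq_one.mp hsub.2
      have hvw : N.cov.arc v w := hw.symm.subset rfl
      obtain ⟨u, hu, huw⟩ := ih w (transGen_of_cov_arc hvw) hvw.2.1
      exact ⟨u, hu, huw.trans (hN.cluster_eq_of_cov_children_eq_singleton hw).symm⟩
    · exact ⟨v, ⟨hv, hsub⟩, rfl⟩

end Net

/-- The set of clusters of the normalisation `Ñ` equals the set of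
clusters (in `N`) of the visible vertices of `N`. -/
theorem stmt11 {V : Type*} (N : Net V) (X : Set V) (hN : N.IsPhylo X) :
    N.normalise.cluster '' N.normalise.verts = N.cluster '' {v | N.Visible v} := by
  ext C
  constructor
  · rintro ⟨v, hv, rfl⟩
    exact ⟨v, hv.1, (hN.cluster_normalise hv).symm⟩
  · rintro ⟨v, hv, rfl⟩
    obtain ⟨u, hu, huv⟩ := hN.exists_mem_normalise_verts_cluster_eq hv
    exact ⟨u, hu, (hN.cluster_normalise hu).trans huv⟩
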